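/- Let F be an n × m Ferrers diagram with m ≥ n ≥ 2. Then the pair (F,2) satisfies κ(F,2) = Σ_{i=1}^{m+n-1} max{0, |D_i ∩ F| - 1} (i.e., (F,2) is MDS-constructible) if and only if |D_i ∩ F| = 0 for all i > m. -/

import Mathlib

/-- The `n × m` matrix board `[n] × [m]` (1-based). -/
def board (n m : ℕ) : Finset (ℕ × ℕ) := Finset.Icc 1 n ×ˢ Finset.Icc 1 m

/-- `F` is an `n × m` Ferrers diagram: contained in the board, contains `(1,1)` and `(n,m)`,
right-aligned and top-aligned. -/
def IsFerrers (n m : ℕ) (F : Finset (ℕ × ℕ)) : Prop :=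
  F ⊆ board n m ∧ (1, 1) ∈ F ∧ (n, m) ∈ F ∧
  (∀ i j, (i, j) ∈ F → j < m → (i, j + 1) ∈ F) ∧
  (∀ i j, (i, j) ∈ F → 1 < i → (i - 1, j) ∈ F)

/-- The `r`-th diagonal of the `n × m` board: `{(i,j) : j - i = m - r}`. -/
def diag (n m r : ℕ) : Finset (ℕ × ℕ) :=
  (board n m).filter (fun p => p.2 + r = p.1 + m)

/-- The height `c_t` of the `t`-th column of `F`. -/
def colH (F : Finset (ℕ × ℕ)) (t : ℕ) : ℕ := (F.filter (fun p => p.2 = t)).card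

/-- `κ_j(F,d) = Σ_{t=1}^{m-d+1+j} max{c_t - j, 0}` (truncated subtraction). -/
def kappaJ (F : Finset (ℕ × ℕ)) (m d j : ℕ) : ℕ :=
  ∑ t ∈ Finset.Icc 1 (m - d + 1 + j), (colH F t - j)

/-- `κ(F,d) = min_{0 ≤ j ≤ d-1} κ_j(F,d)`. -/
noncomputable def kappa (F : Finset (ℕ × ℕ)) (m d : ℕ) : ℕ :=
  sInf (kappaJ F m d '' Set.Iio d)

/-- `Σ_{i=1}^{m+n-1} max{0, |D_i ∩ F| - (d-1)}` (truncated subtraction). -/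
def diagSum (n m : ℕ) (F : Finset (ℕ × ℕ)) (d : ℕ) : ℕ :=
  ∑ i ∈ Finset.Icc 1 (m + n - 1), ((diag n m i ∩ F).card - (d - 1))

/-- The pair `(F,d)` is MDS-constructible. -/
def MDSConstructible (n m : ℕ) (F : Finset (ℕ × ℕ)) (d : ℕ) : Prop :=
  kappa F m d = diagSum n m F d

/-! Every column of a Ferrers diagram is nonempty, so `κ₁(F,2) = |F| - m`, while
`κ₀(F,2) ≥ |F| - c_m ≥ |F| - n ≥ |F| - m`; hence `κ(F,2) = |F| - m`. On the other side,
`Σ_i max{0, |D_i ∩ F| - 1} = |F| - s`, where `s` is the number of diagonals meeting `F`.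
The full first row meets each of the diagonals `D_1, …, D_m`, so `s ≥ m`, and equality
`s = m` says exactly that `F` meets no diagonal beyond `D_m`. -/

open Finset hiding diag

theorem Finset.sum_tsub_one_add_card_filter_ne_zero {ι : Type*} (s : Finset ι) (f : ι → ℕ) :
    ∑ i ∈ s, (f i - 1) + #{i ∈ s | f i ≠ 0} = ∑ i ∈ s, f i := by
  rw [card_filter, ← sum_add_distrib]
  exact sum_congr rfl fun i _ => by split_ifs <;> omega

@[simp]
theorem mem_board {n m : ℕ} {p : ℕ × ℕ} :
    p ∈ board n m ↔ 1 ≤ p.1 ∧ p.1 ≤ n ∧ 1 ≤ p.2 ∧ p.2 ≤ m := by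
  simp [board, and_assoc]

theorem diag_eq_empty {n m i : ℕ} (hi : m + n ≤ i) : diag n m i = ∅ := by
  rw [diag, filter_eq_empty_iff]
  intro p hp
  simp only [mem_board] at hp
  omega

section SubsetBoard

variable {n m : ℕ} {F : Finset (ℕ × ℕ)}

theorem colH_le (hF : F ⊆ board n m) (t : ℕ) : colH F t ≤ n := by
  calc colH F t ≤ #(Icc 1 n) := by
        refine card_le_card_of_injOn Prod.fst (fun p hp => ?_) (fun p hp q hq hpq => ?_)
        · have := mem_board.1 (hF (mem_filter.1 hp).1)
          simp [this.1, this.2.1]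
        · exact Prod.ext hpq ((mem_filter.1 hp).2.trans (mem_filter.1 hq).2.symm)
    _ = n := by simp

theorem colH_eq_zero (hF : F ⊆ board n m) {t : ℕ} (ht : m < t) : colH F t = 0 := by
  rw [colH, card_eq_zero, filter_eq_empty_iff]
  intro p hp
  have := mem_board.1 (hF hp)
  omega

theorem sum_colH_Icc (hF : F ⊆ board n m) {K : ℕ} (hK : m ≤ K) :
    ∑ t ∈ Icc 1 K, colH F t = #F :=
  (card_eq_sum_card_fiberwise fun p hp => by
    have := mem_board.1 (hF hp)
    simp only [coe_Icc, Set.mem_Icc]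
    omega).symm

theorem diag_inter_eq_filter (hF : F ⊆ board n m) (i : ℕ) :
    diag n m i ∩ F = {p ∈ F | p.1 + m - p.2 = i} := by
  ext p
  simp only [diag, mem_inter, mem_filter]
  constructor
  · rintro ⟨⟨-, h⟩, hp⟩
    exact ⟨hp, by omega⟩
  · rintro ⟨hp, h⟩
    have := mem_board.1 (hF hp)
    exact ⟨⟨hF hp, by omega⟩, hp⟩

theorem sum_card_diag_inter (hF : F ⊆ board n m) :
    ∑ i ∈ Icc 1 (m + n - 1), #(diag n m i ∩ F) = #F := by
  simp_rw [diag_inter_eq_filter hF]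
  exact (card_eq_sum_card_fiberwise fun p hp => by
    have := mem_board.1 (hF hp)
    simp only [coe_Icc, Set.mem_Icc]
    omega).symm

end SubsetBoard

def occupiedDiags (n m : ℕ) (F : Finset (ℕ × ℕ)) : Finset ℕ :=
  {i ∈ Icc 1 (m + n - 1) | #(diag n m i ∩ F) ≠ 0}

theorem diagSum_two_add_card_occupiedDiags {n m : ℕ} {F : Finset (ℕ × ℕ)}
    (hF : F ⊆ board n m) : diagSum n m F 2 + #(occupiedDiags n m F) = #F := by
  rw [diagSum, occupiedDiags, ← sum_card_diag_inter hF]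
  exact sum_tsub_one_add_card_filter_ne_zero _ _

theorem kappa_two_eq_min (F : Finset (ℕ × ℕ)) (m : ℕ) :
    kappa F m 2 = min (kappaJ F m 2 0) (kappaJ F m 2 1) := by
  have hIio : Set.Iio 2 = {0, 1} := by
    ext j
    simp only [Set.mem_Iio, Set.mem_insert_iff, Set.mem_singleton_iff]
    omega
  rw [kappa, hIio, Set.image_pair, csInf_pair]

namespace IsFerrers

variable {n m : ℕ} {F : Finset (ℕ × ℕ)}

theorem one_le_left (hF : IsFerrers n m F) : 1 ≤ n :=
  (mem_board.1 (hF.1 hF.2.2.1)).1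

theorem one_le_right (hF : IsFerrers n m F) : 1 ≤ m :=
  (mem_board.1 (hF.1 hF.2.2.1)).2.2.1

theorem one_mem_of_le (hF : IsFerrers n m F) {j : ℕ} (hj : 1 ≤ j) (hjm : j ≤ m) :
    (1, j) ∈ F := by
  induction j, hj using Nat.le_induction with
  | base => exact hF.2.1
  | succ j hj ih => exact hF.2.2.2.1 1 j (ih (by omega)) (by omega)

theorem one_le_colH (hF : IsFerrers n m F) {t : ℕ} (ht : 1 ≤ t) (htm : t ≤ m) :
    1 ≤ colH F t :=
  card_pos.2 ⟨(1, t), mem_filter.2 ⟨hF.one_mem_of_le ht htm, rfl⟩⟩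

theorem kappaJ_two_one_add (hF : IsFerrers n m F) : kappaJ F m 2 1 + m = #F := by
  have hK : m ≤ m - 2 + 1 + 1 := by omega
  have hcols : {t ∈ Icc 1 (m - 2 + 1 + 1) | colH F t ≠ 0} = Icc 1 m := by
    ext t
    simp only [mem_filter, mem_Icc]
    constructor
    · rintro ⟨⟨h1, -⟩, h⟩
      exact ⟨h1, not_lt.1 fun htm => h (colH_eq_zero hF.1 htm)⟩
    · rintro ⟨h1, htm⟩
      exact ⟨⟨h1, htm.trans hK⟩, Nat.one_le_iff_ne_zero.1 (hF.one_le_colH h1 htm)⟩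
  have := sum_tsub_one_add_card_filter_ne_zero (Icc 1 (m - 2 + 1 + 1)) (colH F)
  rwa [hcols, Nat.card_Icc, Nat.add_sub_cancel, sum_colH_Icc hF.1 hK] at this

theorem card_sub_le_kappaJ_two_zero (hF : IsFerrers n m F) (hmn : n ≤ m) :
    #F - m ≤ kappaJ F m 2 0 := by
  obtain ⟨k, rfl⟩ : ∃ k, m = k + 1 := ⟨m - 1, by have := hF.one_le_right; omega⟩
  have hsplit := sum_Icc_succ_top (by omega : 1 ≤ k + 1) (colH F)
  rw [sum_colH_Icc hF.1 le_rfl] at hsplit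
  have hfirst : ∑ t ∈ Icc 1 k, colH F t ≤ kappaJ F (k + 1) 2 0 :=
    sum_le_sum_of_subset (Icc_subset_Icc_right (by omega))
  have := colH_le hF.1 (k + 1)
  omega

theorem kappa_two (hF : IsFerrers n m F) (hmn : n ≤ m) : kappa F m 2 = #F - m := by
  have := hF.kappaJ_two_one_add
  have := hF.card_sub_le_kappaJ_two_zero hmn
  rw [kappa_two_eq_min]
  omega

theorem Icc_subset_occupiedDiags (hF : IsFerrers n m F) : Icc 1 m ⊆ occupiedDiags n m F := by
  intro i hi
  rw [mem_Icc] at hi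
  have hcell : (1, m + 1 - i) ∈ diag n m i ∩ F := by
    rw [diag_inter_eq_filter hF.1, mem_filter]
    exact ⟨hF.one_mem_of_le (by omega) (by omega), by omega⟩
  have := hF.one_le_left
  exact mem_filter.2 ⟨mem_Icc.2 ⟨hi.1, by omega⟩, card_ne_zero_of_mem hcell⟩

theorem occupiedDiags_eq_Icc_iff (hF : IsFerrers n m F) :
    occupiedDiags n m F = Icc 1 m ↔ ∀ i, m < i → #(diag n m i ∩ F) = 0 := by
  constructor
  · intro h i hi
    by_contra hne
    by_cases hin : i ≤ m + n - 1
    · have : i ∈ occupiedDiags n m F := mem_filter.2 ⟨mem_Icc.2 ⟨by omega, hin⟩, hne⟩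
      rw [h, mem_Icc] at this
      omega
    · exact hne (by rw [diag_eq_empty (by omega), empty_inter, card_empty])
  · intro h
    refine Subset.antisymm (fun i hi => ?_) hF.Icc_subset_occupiedDiags
    obtain ⟨hi, hne⟩ := mem_filter.1 hi
    rw [mem_Icc] at hi ⊢
    exact ⟨hi.1, not_lt.1 fun him => hne (h i him)⟩

end IsFerrers

theorem mds_constructible_d2_char_general (n m : ℕ) (F : Finset (ℕ × ℕ)) (hF : IsFerrers n m F)
    (hmn : n ≤ m) :
    MDSConstructible n m F 2 ↔ ∀ i, m < i → (diag n m i ∩ F).card = 0 := by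
  have hsum := diagSum_two_add_card_occupiedDiags hF.1
  have hsub := hF.Icc_subset_occupiedDiags
  have hm := card_le_card hsub
  rw [Nat.card_Icc, Nat.add_sub_cancel] at hm
  rw [MDSConstructible, hF.kappa_two hmn, ← hF.occupiedDiags_eq_Icc_iff]
  constructor
  · intro h
    exact (eq_of_subset_of_card_le hsub (by rw [Nat.card_Icc]; omega)).symm
  · intro h
    rw [h, Nat.card_Icc, Nat.add_sub_cancel] at hsum
    omega

theorem mds_constructible_d2_char (n m : ℕ) (F : Finset (ℕ × ℕ)) (hF : IsFerrers n m F)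
    (hmn : n ≤ m) (hn : 2 ≤ n) :
    MDSConstructible n m F 2 ↔ ∀ i, m < i → (diag n m i ∩ F).card = 0 :=
  mds_constructible_d2_char_general n m F hF hmn
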